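/- arXiv:1105.1640 — 2 statements merged into one kernel-verified Lean document; each statement's English description precedes it below -/
import Mathlib

section
/- Let ρ be a two-qubit Schmidt-correlated state with coefficients c1, c2, c4 satisfying c1 ≠ c4, and let U1, U2 be 2×2 unitary matrices such that (U1⊗U2) ρ (U1⊗U2)† is again of Schmidt-correlated form. Then either U1 and U2 are both diagonal matrices, or U1 and U2 are both antidiagonal matrices (i.e., both have zero diagonal entries). -/
/-! Partial traces are invariant under conjugation by a unitary acting on the traced-out factor,
so the two partial traces of `σ = (U1 ⊗ U2) ρ (U1 ⊗ U2)ᴴ` are `U1 diag(c1, c4) U1ᴴ` and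
`U2 diag(c1, c4) U2ᴴ`. If `σ` has Schmidt-correlated form, both partial traces equal
`diag(σ₀₀,₀₀, σ₁₁,₁₁)`. The off-diagonal entry of `U diag(a, b) Uᴴ` is `(a - b) U₀₀ conj U₁₀`,
so for `c1 ≠ c4` each `Uᵢ` is diagonal or antidiagonal; a mixed pair would force `σ₀₀,₀₀` to
equal both `c1` and `c4`. -/

open Matrix Kronecker

/-- The two-qubit Schmidt-correlated state
`ρ = c1|00⟩⟨00| + c2|00⟩⟨11| + conj(c2)|11⟩⟨00| + c4|11⟩⟨11|`. -/
noncomputable def scState (c1 c4 : ℝ) (c2 : ℂ) :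
    Matrix (Fin 2 × Fin 2) (Fin 2 × Fin 2) ℂ :=
  Matrix.of fun p q =>
    if p = (0, 0) ∧ q = (0, 0) then (c1 : ℂ)
    else if p = (0, 0) ∧ q = (1, 1) then c2
    else if p = (1, 1) ∧ q = (0, 0) then (starRingEnd ℂ) c2
    else if p = (1, 1) ∧ q = (1, 1) then (c4 : ℂ)
    else 0

/-- A 4×4 matrix is of Schmidt-correlated form if its only possibly nonzero entries
are in the rows/columns indexed by `|00⟩` and `|11⟩`. -/
def IsSCform (M : Matrix (Fin 2 × Fin 2) (Fin 2 × Fin 2) ℂ) : Prop :=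
  ∀ p q, M p q ≠ 0 → (p = (0, 0) ∨ p = (1, 1)) ∧ (q = (0, 0) ∨ q = (1, 1))

namespace Matrix

variable {R l m n : Type*}

def partialTraceRight [Fintype n] [AddCommMonoid R] (M : Matrix (m × n) (m × n) R) :
    Matrix m m R :=
  of fun i j => ∑ k, M (i, k) (j, k)

def partialTraceLeft [Fintype m] [AddCommMonoid R] (M : Matrix (m × n) (m × n) R) :
    Matrix n n R :=
  of fun i j => ∑ k, M (k, i) (k, j)

theorem partialTraceRight_kronecker_mul_mul [Fintype m] [Fintype n] [CommSemiring R]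
    [DecidableEq n] (A : Matrix l m R) (B : Matrix n n R) (M : Matrix (m × n) (m × n) R)
    (C : Matrix m l R) (D : Matrix n n R) (hDB : D * B = 1) :
    partialTraceRight ((A ⊗ₖ B) * M * (C ⊗ₖ D)) = A * partialTraceRight M * C := by
  ext i j
  have hDB' : ∀ y k', ∑ k, D y k * B k k' = if y = k' then 1 else 0 := fun y k' => by
    rw [← mul_apply, hDB, one_apply]
  calc ∑ k, ((A ⊗ₖ B) * M * (C ⊗ₖ D)) (i, k) (j, k)
      = ∑ p, ∑ q, A i p.1 * M p q * C q.1 j * ∑ k, D q.2 k * B k p.2 := by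
        simp only [mul_apply, kroneckerMap_apply, Finset.sum_mul, Finset.mul_sum]
        rw [Finset.sum_comm_cycle]
        refine Finset.sum_congr rfl fun p _ => ?_
        rw [Finset.sum_comm]
        refine Finset.sum_congr rfl fun q _ => Finset.sum_congr rfl fun k _ => ?_
        ring
    _ = ∑ p, ∑ x, A i p.1 * M p (x, p.2) * C x j := by
        simp [hDB', Fintype.sum_prod_type]
    _ = (A * partialTraceRight M * C) i j := by
        simp only [partialTraceRight, mul_apply, of_apply, Fintype.sum_prod_type, Finset.sum_mul,
          Finset.mul_sum]
        rw [Finset.sum_comm_cycle]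

theorem partialTraceLeft_kronecker_mul_mul [Fintype m] [Fintype n] [CommSemiring R]
    [DecidableEq m] (A : Matrix m m R) (B : Matrix l n R) (M : Matrix (m × n) (m × n) R)
    (C : Matrix m m R) (D : Matrix n l R) (hCA : C * A = 1) :
    partialTraceLeft ((A ⊗ₖ B) * M * (C ⊗ₖ D)) = B * partialTraceLeft M * D := by
  ext i j
  have hCA' : ∀ y k', ∑ k, C y k * A k k' = if y = k' then 1 else 0 := fun y k' => by
    rw [← mul_apply, hCA, one_apply]
  calc ∑ k, ((A ⊗ₖ B) * M * (C ⊗ₖ D)) (k, i) (k, j)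
      = ∑ p, ∑ q, B i p.2 * M p q * D q.2 j * ∑ k, C q.1 k * A k p.1 := by
        simp only [mul_apply, kroneckerMap_apply, Finset.sum_mul, Finset.mul_sum]
        rw [Finset.sum_comm_cycle]
        refine Finset.sum_congr rfl fun p _ => ?_
        rw [Finset.sum_comm]
        refine Finset.sum_congr rfl fun q _ => Finset.sum_congr rfl fun k _ => ?_
        ring
    _ = ∑ p, ∑ x, B i p.2 * M p (p.1, x) * D x j := by
        simp [hCA', Fintype.sum_prod_type]
    _ = (B * partialTraceLeft M * D) i j := by
        simp only [partialTraceLeft, mul_apply, of_apply, Fintype.sum_prod_type, Finset.sum_mul,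
          Finset.mul_sum]
        rw [Finset.sum_comm_cycle]
        refine Finset.sum_congr rfl fun x _ => Finset.sum_comm

theorem partialTraceRight_conj_kronecker_of_mem_unitaryGroup [Fintype m] [Fintype n]
    [CommRing R] [StarRing R] [DecidableEq n] (A : Matrix m m R) {B : Matrix n n R}
    (hB : B ∈ unitaryGroup n R) (M : Matrix (m × n) (m × n) R) :
    partialTraceRight ((A ⊗ₖ B) * M * (A ⊗ₖ B)ᴴ) = A * partialTraceRight M * Aᴴ := by
  rw [conjTranspose_kronecker]
  exact partialTraceRight_kronecker_mul_mul _ _ _ _ _ (mem_unitaryGroup_iff'.1 hB)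

theorem partialTraceLeft_conj_kronecker_of_mem_unitaryGroup [Fintype m] [Fintype n]
    [CommRing R] [StarRing R] [DecidableEq m] {A : Matrix m m R} (hA : A ∈ unitaryGroup m R)
    (B : Matrix n n R) (M : Matrix (m × n) (m × n) R) :
    partialTraceLeft ((A ⊗ₖ B) * M * (A ⊗ₖ B)ᴴ) = B * partialTraceLeft M * Bᴴ := by
  rw [conjTranspose_kronecker]
  exact partialTraceLeft_kronecker_mul_mul _ _ _ _ _ (mem_unitaryGroup_iff'.1 hA)

section FinTwo

variable {𝕜 : Type*} [RCLike 𝕜]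

theorem mul_diagonal_fin_two_mul_conjTranspose_apply [CommSemiring R] [StarRing R]
    (U : Matrix (Fin 2) (Fin 2) R) (a b : R) (i j : Fin 2) :
    (U * diagonal ![a, b] * Uᴴ) i j = a * U i 0 * star (U j 0) + b * U i 1 * star (U j 1) := by
  simp [mul_apply, Fin.sum_univ_two, mul_comm]

theorem norm_apply_eq_of_mem_unitaryGroup_fin_two {U : Matrix (Fin 2) (Fin 2) 𝕜}
    (hU : U ∈ unitaryGroup (Fin 2) 𝕜) : ‖U 0 0‖ = ‖U 1 1‖ ∧ ‖U 0 1‖ = ‖U 1 0‖ := by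
  have hrow (i : Fin 2) : ‖U i 0‖ ^ 2 + ‖U i 1‖ ^ 2 = 1 := by
    have := congr_fun₂ (mem_unitaryGroup_iff.1 hU) i i
    simp only [mul_apply, Fin.sum_univ_two, star_apply, RCLike.star_def, RCLike.mul_conj,
      one_apply_eq] at this
    exact_mod_cast this
  have hcol : ‖U 0 0‖ ^ 2 + ‖U 1 0‖ ^ 2 = 1 := by
    have := congr_fun₂ (mem_unitaryGroup_iff'.1 hU) 0 0
    simp only [mul_apply, Fin.sum_univ_two, star_apply, RCLike.star_def, RCLike.conj_mul,
      one_apply_eq] at this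
    exact_mod_cast this
  have h0 := hrow 0
  have h1 := hrow 1
  constructor <;> rw [← pow_left_inj₀ (norm_nonneg _) (norm_nonneg _) two_ne_zero] <;> linarith

theorem diag_or_antidiag_of_conj_diagonal_fin_two {U : Matrix (Fin 2) (Fin 2) 𝕜}
    (hU : U ∈ unitaryGroup (Fin 2) 𝕜) {a b : 𝕜} (hab : a ≠ b)
    (h : (U * diagonal ![a, b] * Uᴴ) 0 1 = 0) :
    (U 0 1 = 0 ∧ U 1 0 = 0 ∧ (U * diagonal ![a, b] * Uᴴ) 0 0 = a) ∨
    (U 0 0 = 0 ∧ U 1 1 = 0 ∧ (U * diagonal ![a, b] * Uᴴ) 0 0 = b) := by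
  have hUU := mem_unitaryGroup_iff.1 hU
  have h00 : U 0 0 * star (U 0 0) + U 0 1 * star (U 0 1) = 1 := by
    simpa [mul_apply, Fin.sum_univ_two] using congr_fun₂ hUU 0 0
  have h01 : U 0 0 * star (U 1 0) + U 0 1 * star (U 1 1) = 0 := by
    simpa [mul_apply, Fin.sum_univ_two] using congr_fun₂ hUU 0 1
  rw [mul_diagonal_fin_two_mul_conjTranspose_apply] at h ⊢
  have hprod : (a - b) * (U 0 0 * star (U 1 0)) = 0 := by linear_combination h - b * h01
  obtain ⟨hd, ha⟩ := norm_apply_eq_of_mem_unitaryGroup_fin_two hU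
  obtain h0 | h0 : U 0 0 = 0 ∨ U 1 0 = 0 := by
    simpa using (mul_eq_zero.1 hprod).resolve_left (sub_ne_zero.2 hab)
  · refine .inr ⟨h0, norm_eq_zero.1 (hd ▸ norm_eq_zero.2 h0), ?_⟩
    linear_combination b * h00 + (a - b) * star (U 0 0) * h0
  · have h1 : U 0 1 = 0 := norm_eq_zero.1 (ha ▸ norm_eq_zero.2 h0)
    refine .inl ⟨h1, h0, ?_⟩
    linear_combination a * h00 + (b - a) * star (U 0 1) * h1

end FinTwo

end Matrix

theorem partialTraceRight_scState (c1 c4 : ℝ) (c2 : ℂ) :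
    partialTraceRight (scState c1 c4 c2) = diagonal ![(c1 : ℂ), c4] := by
  ext i j
  fin_cases i <;> fin_cases j <;> simp [partialTraceRight, scState, Fin.sum_univ_two]

theorem partialTraceLeft_scState (c1 c4 : ℝ) (c2 : ℂ) :
    partialTraceLeft (scState c1 c4 c2) = diagonal ![(c1 : ℂ), c4] := by
  ext i j
  fin_cases i <;> fin_cases j <;> simp [partialTraceLeft, scState, Fin.sum_univ_two]

namespace IsSCform

variable {M : Matrix (Fin 2 × Fin 2) (Fin 2 × Fin 2) ℂ}

theorem apply_eq_zero (hM : IsSCform M) {p q : Fin 2 × Fin 2}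
    (hpq : ¬((p = (0, 0) ∨ p = (1, 1)) ∧ (q = (0, 0) ∨ q = (1, 1)))) : M p q = 0 :=
  not_not.1 (mt (hM p q) hpq)

theorem partialTraceRight_eq (hM : IsSCform M) :
    partialTraceRight M = diagonal ![M (0, 0) (0, 0), M (1, 1) (1, 1)] := by
  ext i j
  fin_cases i <;> fin_cases j <;> simp [partialTraceRight, Fin.sum_univ_two, hM.apply_eq_zero]

theorem partialTraceLeft_eq (hM : IsSCform M) :
    partialTraceLeft M = diagonal ![M (0, 0) (0, 0), M (1, 1) (1, 1)] := by
  ext i j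
  fin_cases i <;> fin_cases j <;> simp [partialTraceLeft, Fin.sum_univ_two, hM.apply_eq_zero]

end IsSCform

theorem sc_form_diag_or_antidiag_general (c1 c4 : ℝ) (c2 : ℂ)
    (hne : c1 ≠ c4)
    (U1 U2 : Matrix (Fin 2) (Fin 2) ℂ)
    (hU1 : U1 ∈ Matrix.unitaryGroup (Fin 2) ℂ) (hU2 : U2 ∈ Matrix.unitaryGroup (Fin 2) ℂ)
    (hform : IsSCform ((U1 ⊗ₖ U2) * scState c1 c4 c2 * (U1 ⊗ₖ U2)ᴴ)) :
    (U1 0 1 = 0 ∧ U1 1 0 = 0 ∧ U2 0 1 = 0 ∧ U2 1 0 = 0) ∨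
    (U1 0 0 = 0 ∧ U1 1 1 = 0 ∧ U2 0 0 = 0 ∧ U2 1 1 = 0) := by
  set σ := (U1 ⊗ₖ U2) * scState c1 c4 c2 * (U1 ⊗ₖ U2)ᴴ
  have hR :
      U1 * diagonal ![(c1 : ℂ), c4] * U1ᴴ = diagonal ![σ (0, 0) (0, 0), σ (1, 1) (1, 1)] := by
    rw [← partialTraceRight_scState c1 c4 c2,
      ← partialTraceRight_conj_kronecker_of_mem_unitaryGroup U1 hU2, hform.partialTraceRight_eq]
  have hL :
      U2 * diagonal ![(c1 : ℂ), c4] * U2ᴴ = diagonal ![σ (0, 0) (0, 0), σ (1, 1) (1, 1)] := by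
    rw [← partialTraceLeft_scState c1 c4 c2,
      ← partialTraceLeft_conj_kronecker_of_mem_unitaryGroup hU1 U2, hform.partialTraceLeft_eq]
  have hR00 : (U1 * diagonal ![(c1 : ℂ), c4] * U1ᴴ) 0 0 = σ (0, 0) (0, 0) := by simp [hR]
  have hL00 : (U2 * diagonal ![(c1 : ℂ), c4] * U2ᴴ) 0 0 = σ (0, 0) (0, 0) := by simp [hL]
  have hne' : (c1 : ℂ) ≠ c4 := by exact_mod_cast hne
  rcases diag_or_antidiag_of_conj_diagonal_fin_two hU1 hne' (by simp [hR]) with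
    ⟨h01, h10, hσ1⟩ | ⟨h00, h11, hσ1⟩ <;>
  rcases diag_or_antidiag_of_conj_diagonal_fin_two hU2 hne' (by simp [hL]) with
    ⟨h01', h10', hσ2⟩ | ⟨h00', h11', hσ2⟩
  · exact .inl ⟨h01, h10, h01', h10'⟩
  · exact absurd (by linear_combination hR00 - hL00 - hσ1 + hσ2) hne'
  · exact absurd (by linear_combination hσ1 - hσ2 - hR00 + hL00) hne'
  · exact .inr ⟨h00, h11, h00', h11'⟩

/-- If `c1 ≠ c4` and the local unitary image of an SC state is again of SC form, then
`U1` and `U2` are both diagonal, or both antidiagonal. -/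
theorem sc_form_diag_or_antidiag (c1 c4 : ℝ) (c2 : ℂ)
    (hc1 : 0 ≤ c1) (hc4 : 0 ≤ c4) (hsum : c1 + c4 = 1)
    (hc2 : ‖c2‖ ^ 2 ≤ c1 * c4) (hne : c1 ≠ c4)
    (U1 U2 : Matrix (Fin 2) (Fin 2) ℂ)
    (hU1 : U1 ∈ Matrix.unitaryGroup (Fin 2) ℂ) (hU2 : U2 ∈ Matrix.unitaryGroup (Fin 2) ℂ)
    (hform : IsSCform ((U1 ⊗ₖ U2) * scState c1 c4 c2 * (U1 ⊗ₖ U2)ᴴ)) :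
    (U1 0 1 = 0 ∧ U1 1 0 = 0 ∧ U2 0 1 = 0 ∧ U2 1 0 = 0) ∨
    (U1 0 0 = 0 ∧ U1 1 1 = 0 ∧ U2 0 0 = 0 ∧ U2 1 1 = 0) :=
  sc_form_diag_or_antidiag_general c1 c4 c2 hne U1 U2 hU1 hU2 hform
end

section
/- Let ρ and ρ' be (MN)×(MN) positive semidefinite Hermitian matrices of trace one acting on ℂ^M⊗ℂ^N, having the same eigenvalues λ1, …, λ_{MN}, all of which are pairwise distinct (non-degenerate). Let X and Y be unitary matrices with ρ = X·Λ·X† and ρ' = Y·Λ·Y†, where Λ = diag(λ1, …, λ_{MN}). Then ρ' is equivalent to ρ under local unitary transformations (i.e., there exist an M×M unitary U1 and an N×N unitary U2 with ρ' = (U1⊗U2) ρ (U1⊗U2)†) if and only if there exist real numbers θ1, …, θ_{MN} such that the unitary matrix X·diag(e^{iθ1}, …, e^{iθ_{MN}})·Y† is tensor decomposable, i.e., equals W1⊗W2 for some M×M matrix W1 and N×N matrix W2. -/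
/-!
Write `Λ = diagonal λ`. If `ρ' = U ρ Uᴴ`, then `Z = Xᴴ Uᴴ Y` satisfies `Zᴴ Λ Z = Λ`, so `Z`
commutes with `Λ`; as the eigenvalues are distinct, `Z` is diagonal, hence a diagonal of phases,
and `X Z Yᴴ = Uᴴ`. Conversely, if `K = X D Yᴴ = W₁ ⊗ W₂` with `D` a diagonal of phases, then
`Kᴴ ρ K = ρ'` and `K` is unitary. A unitary Kronecker product can be rescaled so that both factors
are unitary: `W₁ᴴW₁ ⊗ W₂ᴴW₂ = 1` forces `W₁ᴴW₁ = c • 1` and `W₂ᴴW₂ = c⁻¹ • 1` with `c > 0`.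
-/

open Matrix Kronecker
open scoped ComplexOrder

namespace Complex

theorem exp_ofReal_mul_I_mem_unitary (θ : ℝ) : exp (θ * I) ∈ unitary ℂ := by
  rw [Unitary.mem_iff_star_mul_self, star_def, ← exp_conj, ← exp_add]
  simp

theorem exists_exp_ofReal_mul_I_eq_of_mem_unitary {z : ℂ} (hz : z ∈ unitary ℂ) :
    ∃ θ : ℝ, exp (θ * I) = z :=
  ⟨z.arg, by simpa [CStarRing.norm_of_mem_unitary hz] using norm_mul_exp_arg_mul_I z⟩

end Complex

namespace Matrix

variable {m n : Type*} [DecidableEq m] [DecidableEq n]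

theorem diagonal_mem_unitaryGroup_iff [Fintype n] {α : Type*} [CommRing α] [StarRing α]
    {d : n → α} :
    diagonal d ∈ unitaryGroup n α ↔ ∀ i, d i ∈ unitary α := by
  simp only [mem_unitaryGroup_iff', Unitary.mem_iff_star_mul_self, star_eq_conjTranspose,
    diagonal_conjTranspose, diagonal_mul_diagonal, ← diagonal_one, diagonal_eq_diagonal_iff]
  rfl

theorem eq_diagonal_diag_of_commute_diagonal [Fintype n] {R : Type*} [CommRing R]
    [NoZeroDivisors R] {d : n → R} (hd : Function.Injective d) {Z : Matrix n n R}
    (h : Commute (diagonal d) Z) :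
    Z = diagonal Z.diag := by
  ext i j
  rcases eq_or_ne i j with rfl | hij
  · simp
  · have hij' : Z i j * (d i - d j) = 0 := by
      have := congrFun (congrFun h i) j
      simp only [diagonal_mul, mul_diagonal] at this
      linear_combination this
    simpa [hij, sub_ne_zero.mpr (hd.ne hij)] using hij'

theorem exists_smul_one_of_kronecker_eq_one {K : Type*} [Field K] [Nonempty m] [Nonempty n]
    {A : Matrix m m K} {B : Matrix n n K} (h : A ⊗ₖ B = 1) :
    ∃ c : K, c ≠ 0 ∧ A = c • 1 ∧ B = c⁻¹ • 1 := by
  obtain ⟨i₀⟩ := ‹Nonempty m›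
  obtain ⟨j₀⟩ := ‹Nonempty n›
  rw [← one_kronecker_one] at h
  have entry (i k j l) : A i k * B j l = (1 : Matrix m m K) i k * (1 : Matrix n n K) j l := by
    simpa using congrFun (congrFun h (i, j)) (k, l)
  have hAB : A i₀ i₀ * B j₀ j₀ = 1 := by simpa using entry i₀ i₀ j₀ j₀
  have hA : A i₀ i₀ ≠ 0 := left_ne_zero_of_mul_eq_one hAB
  refine ⟨A i₀ i₀, hA, ?_, ?_⟩
  · ext i k
    have := entry i k j₀ j₀
    simp only [one_apply_eq, mul_one] at this
    simp only [smul_apply, smul_eq_mul]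
    linear_combination (-A i k) * hAB + A i₀ i₀ * this
  · ext j l
    have := entry i₀ i₀ j l
    simp only [one_apply_eq, one_mul] at this
    simp only [smul_apply, smul_eq_mul]
    field_simp
    linear_combination this

theorem exists_unitary_kronecker_eq_of_mem_unitaryGroup [Fintype m] [Fintype n] {𝕜 : Type*}
    [RCLike 𝕜] {W₁ : Matrix m m 𝕜} {W₂ : Matrix n n 𝕜} (h : W₁ ⊗ₖ W₂ ∈ unitaryGroup (m × n) 𝕜) :
    ∃ V₁ ∈ unitaryGroup m 𝕜, ∃ V₂ ∈ unitaryGroup n 𝕜, V₁ ⊗ₖ V₂ = W₁ ⊗ₖ W₂ := by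
  cases isEmpty_or_nonempty m
  · exact ⟨1, one_mem _, 1, one_mem _, Subsingleton.elim _ _⟩
  cases isEmpty_or_nonempty n
  · exact ⟨1, one_mem _, 1, one_mem _, Subsingleton.elim _ _⟩
  have hW : (W₁ᴴ * W₁) ⊗ₖ (W₂ᴴ * W₂) = 1 := by
    rw [mul_kronecker_mul, ← conjTranspose_kronecker, ← star_eq_conjTranspose]
    exact mem_unitaryGroup_iff'.mp h
  obtain ⟨c, hc0, hc₁, hc₂⟩ := exists_smul_one_of_kronecker_eq_one hW
  obtain ⟨i₀⟩ := ‹Nonempty m›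
  have hc : 0 < c := by
    refine lt_of_le_of_ne ?_ hc0.symm
    simpa [hc₁] using (posSemidef_conjTranspose_mul_self W₁).diag_nonneg (i := i₀)
  obtain ⟨r, hr, rfl⟩ := RCLike.pos_iff_exists_ofReal.mp hc
  have hs : (√r : 𝕜) ≠ 0 := RCLike.ofReal_ne_zero.mpr (Real.sqrt_ne_zero'.mpr hr)
  have hsr : (√r : 𝕜) * √r = r := by exact_mod_cast Real.mul_self_sqrt hr.le
  refine ⟨((√r : 𝕜))⁻¹ • W₁, ?_, (√r : 𝕜) • W₂, ?_, ?_⟩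
  · rw [mem_unitaryGroup_iff', star_smul, star_eq_conjTranspose, smul_mul_smul_comm, hc₁,
      smul_smul, RCLike.star_def, map_inv₀, RCLike.conj_ofReal, ← hsr, ← mul_inv,
      inv_mul_cancel₀ (mul_ne_zero hs hs), one_smul]
  · rw [mem_unitaryGroup_iff', star_smul, star_eq_conjTranspose, smul_mul_smul_comm, hc₂,
      smul_smul, RCLike.star_def, RCLike.conj_ofReal, ← hsr, mul_inv_cancel₀ (mul_ne_zero hs hs),
      one_smul]
  · rw [smul_kronecker, kronecker_smul, smul_smul, inv_mul_cancel₀ hs, one_smul]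

theorem exists_diagonal_exp_eq_of_conj_diagonal_eq [Fintype n] {d : n → ℂ}
    (hd : Function.Injective d) {Z : Matrix n n ℂ} (hZ : Z ∈ unitaryGroup n ℂ)
    (h : star Z * diagonal d * Z = diagonal d) :
    ∃ θ : n → ℝ, diagonal (fun i => Complex.exp (θ i * Complex.I)) = Z := by
  have hcomm : Commute (diagonal d) Z :=
    calc diagonal d * Z = (Z * star Z) * diagonal d * Z := by
          rw [Unitary.mul_star_self_of_mem hZ, one_mul]
      _ = Z * (star Z * diagonal d * Z) := by simp only [mul_assoc]
      _ = Z * diagonal d := by rw [h]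
  have hZd := eq_diagonal_diag_of_commute_diagonal hd hcomm
  rw [hZd, diagonal_mem_unitaryGroup_iff] at hZ
  choose θ hθ using fun i ↦ Complex.exists_exp_ofReal_mul_I_eq_of_mem_unitary (hZ i)
  exact ⟨θ, by rw [hZd]; simp [hθ]⟩

theorem exists_mul_diagonal_exp_mul_eq_of_conj_eq [Fintype n] {d : n → ℂ}
    (hd : Function.Injective d) {X Y U : Matrix n n ℂ} (hX : X ∈ unitaryGroup n ℂ)
    (hY : Y ∈ unitaryGroup n ℂ) (hU : U ∈ unitaryGroup n ℂ)
    (h : Y * diagonal d * Yᴴ = U * (X * diagonal d * Xᴴ) * Uᴴ) :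
    ∃ θ : n → ℝ, X * diagonal (fun i => Complex.exp (θ i * Complex.I)) * Yᴴ = Uᴴ := by
  have hXX : X * Xᴴ = 1 := hX.2
  have hYY : Yᴴ * Y = 1 := hY.1
  have hYY' : Y * Yᴴ = 1 := hY.2
  have hZ : Xᴴ * Uᴴ * Y ∈ unitaryGroup n ℂ :=
    mul_mem (mul_mem (Unitary.star_mem hX) (Unitary.star_mem hU)) hY
  obtain ⟨θ, hθ⟩ := exists_diagonal_exp_eq_of_conj_diagonal_eq hd hZ <| by
    simp only [star_eq_conjTranspose, conjTranspose_mul, conjTranspose_conjTranspose]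
    calc Yᴴ * (U * X) * diagonal d * (Xᴴ * Uᴴ * Y)
        = Yᴴ * (U * (X * diagonal d * Xᴴ) * Uᴴ) * Y := by simp only [mul_assoc]
      _ = Yᴴ * Y * diagonal d * (Yᴴ * Y) := by rw [← h]; simp only [mul_assoc]
      _ = diagonal d := by rw [hYY, one_mul, mul_one]
  refine ⟨θ, ?_⟩
  calc X * diagonal (fun i => Complex.exp (θ i * Complex.I)) * Yᴴ
      = X * Xᴴ * Uᴴ * (Y * Yᴴ) := by rw [hθ]; simp only [mul_assoc]
    _ = Uᴴ := by rw [hXX, hYY', one_mul, mul_one]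

theorem conjTranspose_mul_conj_mul_eq_of_diagonal_mem_unitaryGroup [Fintype n] {α : Type*}
    [CommRing α] [StarRing α] {X Y : Matrix n n α} {d e : n → α} (hX : X ∈ unitaryGroup n α)
    (he : diagonal e ∈ unitaryGroup n α) :
    (X * diagonal e * Yᴴ)ᴴ * (X * diagonal d * Xᴴ) * (X * diagonal e * Yᴴ) =
      Y * diagonal d * Yᴴ := by
  have hXX : Xᴴ * X = 1 := hX.1
  have hee : (diagonal e)ᴴ * diagonal e = 1 := he.1
  calc (X * diagonal e * Yᴴ)ᴴ * (X * diagonal d * Xᴴ) * (X * diagonal e * Yᴴ)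
      = Y * ((diagonal e)ᴴ * (Xᴴ * X) * diagonal d * (Xᴴ * X) * diagonal e) * Yᴴ := by
        simp only [conjTranspose_mul, conjTranspose_conjTranspose, mul_assoc]
    _ = Y * ((diagonal e)ᴴ * diagonal e * diagonal d) * Yᴴ := by
        rw [hXX, mul_one, mul_one, mul_assoc _ (diagonal d), (commute_diagonal d e).eq]
        simp only [mul_assoc]
    _ = Y * diagonal d * Yᴴ := by rw [hee, one_mul]

end Matrix

theorem nondegenerate_LU_iff_decomposable_general (M N : ℕ)
    (ρ ρ' : Matrix (Fin M × Fin N) (Fin M × Fin N) ℂ)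
    (lam : Fin M × Fin N → ℝ) (hdist : Function.Injective lam)
    (X Y : Matrix (Fin M × Fin N) (Fin M × Fin N) ℂ)
    (hX : X ∈ Matrix.unitaryGroup (Fin M × Fin N) ℂ)
    (hY : Y ∈ Matrix.unitaryGroup (Fin M × Fin N) ℂ)
    (hρX : ρ = X * Matrix.diagonal (fun i => (lam i : ℂ)) * Xᴴ)
    (hρY : ρ' = Y * Matrix.diagonal (fun i => (lam i : ℂ)) * Yᴴ) :
    (∃ (U1 : Matrix (Fin M) (Fin M) ℂ) (U2 : Matrix (Fin N) (Fin N) ℂ),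
        U1 ∈ Matrix.unitaryGroup (Fin M) ℂ ∧ U2 ∈ Matrix.unitaryGroup (Fin N) ℂ ∧
        ρ' = (U1 ⊗ₖ U2) * ρ * (U1 ⊗ₖ U2)ᴴ) ↔
      ∃ (θ : Fin M × Fin N → ℝ) (W1 : Matrix (Fin M) (Fin M) ℂ)
          (W2 : Matrix (Fin N) (Fin N) ℂ),
        X * Matrix.diagonal (fun i => Complex.exp (θ i * Complex.I)) * Yᴴ = W1 ⊗ₖ W2 := by
  subst hρX hρY
  constructor
  · rintro ⟨U₁, U₂, hU₁, hU₂, hU⟩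
    obtain ⟨θ, hθ⟩ := exists_mul_diagonal_exp_mul_eq_of_conj_eq
      (Complex.ofReal_injective.comp hdist) hX hY (kronecker_mem_unitary hU₁ hU₂) hU
    exact ⟨θ, U₁ᴴ, U₂ᴴ, by rw [hθ, conjTranspose_kronecker]⟩
  · rintro ⟨θ, W₁, W₂, hW⟩
    have hD := diagonal_mem_unitaryGroup_iff.mpr fun i ↦ Complex.exp_ofReal_mul_I_mem_unitary (θ i)
    obtain ⟨V₁, hV₁, V₂, hV₂, hV⟩ := exists_unitary_kronecker_eq_of_mem_unitaryGroup
      (hW ▸ mul_mem (mul_mem hX hD) (Unitary.star_mem hY))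
    refine ⟨V₁ᴴ, V₂ᴴ, Unitary.star_mem hV₁, Unitary.star_mem hV₂, ?_⟩
    rw [← conjTranspose_kronecker, conjTranspose_conjTranspose, hV, ← hW,
      conjTranspose_mul_conj_mul_eq_of_diagonal_mem_unitaryGroup hX hD]

/-- For two non-degenerate density matrices `ρ = XΛX†` and `ρ' = YΛY†` on
`ℂᴹ ⊗ ℂᴺ` with the same eigenvalue diagonal `Λ` (all eigenvalues pairwise distinct)
and unitary `X`, `Y`: `ρ'` is local unitary equivalent to `ρ` iff for some phases
`θ₁, …, θ_{MN}` the unitary matrix `X·diag(e^{iθ₁},…,e^{iθ_{MN}})·Y†` is tensor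
decomposable. -/
theorem nondegenerate_LU_iff_decomposable (M N : ℕ)
    (ρ ρ' : Matrix (Fin M × Fin N) (Fin M × Fin N) ℂ)
    (hρ : ρ.PosSemidef) (hρ' : ρ'.PosSemidef)
    (htr : ρ.trace = 1) (htr' : ρ'.trace = 1)
    (lam : Fin M × Fin N → ℝ) (hdist : Function.Injective lam)
    (X Y : Matrix (Fin M × Fin N) (Fin M × Fin N) ℂ)
    (hX : X ∈ Matrix.unitaryGroup (Fin M × Fin N) ℂ)
    (hY : Y ∈ Matrix.unitaryGroup (Fin M × Fin N) ℂ)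
    (hρX : ρ = X * Matrix.diagonal (fun i => (lam i : ℂ)) * Xᴴ)
    (hρY : ρ' = Y * Matrix.diagonal (fun i => (lam i : ℂ)) * Yᴴ) :
    (∃ (U1 : Matrix (Fin M) (Fin M) ℂ) (U2 : Matrix (Fin N) (Fin N) ℂ),
        U1 ∈ Matrix.unitaryGroup (Fin M) ℂ ∧ U2 ∈ Matrix.unitaryGroup (Fin N) ℂ ∧
        ρ' = (U1 ⊗ₖ U2) * ρ * (U1 ⊗ₖ U2)ᴴ) ↔
      ∃ (θ : Fin M × Fin N → ℝ) (W1 : Matrix (Fin M) (Fin M) ℂ)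
          (W2 : Matrix (Fin N) (Fin N) ℂ),
        X * Matrix.diagonal (fun i => Complex.exp (θ i * Complex.I)) * Yᴴ = W1 ⊗ₖ W2 :=
  nondegenerate_LU_iff_decomposable_general M N ρ ρ' lam hdist X Y hX hY hρX hρY
end
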